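/- arXiv:1611.06187 — 8 statements merged into one kernel-verified Lean document; each statement's English description precedes it below -/
import Mathlib

section
/- Let Δ₊ be a symmetric positive definite n₊×n₊ matrix, Δ₋ a symmetric negative definite n₋×n₋ matrix, and R an n₊×n₋ matrix. If C_L := Δ₋ + Rᵀ Δ₊ R is negative semidefinite, then the dual matrix C̃_L := −Δ₊ − Δ₊ R Δ₋⁻¹ Rᵀ Δ₊ is also negative semidefinite. -/
open Matrix

/-- if `C_L = Δ₋ + Rᵀ Δ₊ R` is negative semidefinite, then the dual
matrix `C̃_L = −Δ₊ − Δ₊ R Δ₋⁻¹ Rᵀ Δ₊` is negative semidefinite. -/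
theorem stmt_1 {np nm : ℕ}
    (Δp : Matrix (Fin np) (Fin np) ℝ) (Δm : Matrix (Fin nm) (Fin nm) ℝ)
    (hΔp : Δp.PosDef) (hΔm : (-Δm).PosDef)
    (R : Matrix (Fin np) (Fin nm) ℝ)
    (hCL : (-(Δm + Rᵀ * Δp * R)).PosSemidef) :
    (-(-Δp - Δp * R * Δm⁻¹ * Rᵀ * Δp)).PosSemidef := by
  have hΔmInv : Invertible Δm := by
    have h := hΔm.isUnit
    exact (neg_neg Δm ▸ h.neg).invertible
  have hmul : Δm⁻¹ * Δm = 1 := inv_mul_of_invertible Δm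
  have hpsym : Δpᵀ = Δp := hΔp.isHermitian
  have hmsym : Δmᵀ = Δm := by
    have := hΔm.isHermitian
    simpa [Matrix.IsHermitian, transpose_neg, neg_eq_iff_eq_neg] using
      congrArg Neg.neg this
  have hminvsym : (Δm⁻¹)ᵀ = Δm⁻¹ := by
    rw [transpose_nonsing_inv, hmsym]
  set A := Δm⁻¹ * Rᵀ * Δp with hA
  set B := (1 : Matrix (Fin np) (Fin np) ℝ) + R * A with hB
  have key : -(-Δp - Δp * R * Δm⁻¹ * Rᵀ * Δp)
      = Bᵀ * Δp * B + Aᵀ * (-(Δm + Rᵀ * Δp * R)) * A := by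
    have hAt : Aᵀ = Δp * R * Δm⁻¹ := by
      simp [hA, transpose_mul, hpsym, hminvsym, Matrix.mul_assoc]
    have hBt : Bᵀ = 1 + Aᵀ * Rᵀ := by
      simp [hB, transpose_mul]
    rw [hBt, hAt, hB, hA]
    have h1 : Δp * R * Δm⁻¹ * Δm = Δp * R := by
      rw [Matrix.mul_assoc (Δp * R), hmul, Matrix.mul_one]
    simp only [Matrix.add_mul, Matrix.mul_add, Matrix.one_mul, Matrix.mul_one,
      Matrix.neg_mul, Matrix.mul_neg, neg_add]
    rw [show Δp * R * Δm⁻¹ * Δm * (Δm⁻¹ * Rᵀ * Δp) = Δp * R * (Δm⁻¹ * Rᵀ * Δp) by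
      rw [h1]]
    simp only [Matrix.mul_assoc]
    abel
  rw [key]
  exact ((hΔp.posSemidef.conjTranspose_mul_mul_same B)).add
    (hCL.conjTranspose_mul_mul_same A)
end

section
/- Let Δ₊ be symmetric positive definite (size n₊), Δ₋ symmetric negative definite (size n₋), and R an n₋×n₊ matrix. If C_R := −Δ₊ − Rᵀ Δ₋ R is negative semidefinite, then C̃_R := Δ₋ + Δ₋ R Δ₊⁻¹ Rᵀ Δ₋ is negative semidefinite. -/
/-! With `B = Rᵀ (-Δ₋)`, the matrices `-C_R` and `-C̃_R` are the two Schur complements of the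
block matrix `[[Δ₊, B], [Bᵀ, -Δ₋]]`, whose diagonal blocks are positive definite. Each of them is
positive semidefinite exactly when the block matrix is, hence they are so simultaneously. -/

open Matrix

namespace Matrix.PosDef

variable {m n R : Type*} [Fintype m] [Fintype n] [DecidableEq m] [DecidableEq n]
  [Field R] [PartialOrder R] [StarRing R] [StarOrderedRing R]

theorem posSemidef_schur_comm {A : Matrix m m R} {D : Matrix n n R} (B : Matrix m n R)
    (hA : A.PosDef) (hD : D.PosDef) :
    (A - B * D⁻¹ * Bᴴ).PosSemidef ↔ (D - Bᴴ * A⁻¹ * B).PosSemidef := by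
  have := hA.isUnit.invertible
  have := hD.isUnit.invertible
  rw [← fromBlocks₂₂ A B hD, fromBlocks₁₁ B D hA]

end Matrix.PosDef

/-- if `C_R = −Δ₊ − Rᵀ Δ₋ R` is negative semidefinite, then
`C̃_R = Δ₋ + Δ₋ R Δ₊⁻¹ Rᵀ Δ₋` is negative semidefinite. -/
theorem stmt_2 {np nm : ℕ}
    (Δp : Matrix (Fin np) (Fin np) ℝ) (Δm : Matrix (Fin nm) (Fin nm) ℝ)
    (hΔp : Δp.PosDef) (hΔm : (-Δm).PosDef)
    (R : Matrix (Fin nm) (Fin np) ℝ)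
    (hCR : (-(-Δp - Rᵀ * Δm * R)).PosSemidef) :
    (-(Δm + Δm * R * Δp⁻¹ * Rᵀ * Δm)).PosSemidef := by
  have := hΔm.isUnit.invertible
  have hΔm_symm : Δm.IsSymm := by
    simpa using isHermitian_neg_iff.mp hΔm.1
  set B := Rᵀ * -Δm
  have hB : Bᴴ = -Δm * R := by
    simp [B, conjTranspose_eq_transpose_of_trivial, transpose_mul, hΔm_symm.eq]
  have hschur₂₂ : Δp - B * (-Δm)⁻¹ * Bᴴ = -(-Δp - Rᵀ * Δm * R) := by
    rw [hB, mul_inv_cancel_right_of_invertible]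
    simp only [Matrix.neg_mul, Matrix.mul_neg, Matrix.mul_assoc, sub_neg_eq_add, neg_sub]
    abel
  have hschur₁₁ : -Δm - Bᴴ * Δp⁻¹ * B = -(Δm + Δm * R * Δp⁻¹ * Rᵀ * Δm) := by
    rw [hB]
    simp only [B, Matrix.neg_mul, Matrix.mul_neg, neg_neg, Matrix.mul_assoc]
    abel
  rwa [← hschur₁₁, ← hΔp.posSemidef_schur_comm B hΔm, hschur₂₂]
end

section
/- Let A = Z₊ Δ₊ Z₊ᵀ + Z₋ Δ₋ Z₋ᵀ with Δ₊ symmetric positive definite and Δ₋ symmetric negative definite, let R_L be an n₊×n₋ matrix, P_L invertible, and define B_L = P_L(Z₊ᵀ + R_L Z₋ᵀ) and the penalty Σ₀ = −Z₊ Δ₊ P_L⁻¹. If C_L := Δ₋ + R_Lᵀ Δ₊ R_L is negative semidefinite, then C₀ := A + Σ₀ B_L + B_Lᵀ Σ₀ᵀ = Z₋ C_L Z₋ᵀ − B_Lᵀ P_L⁻ᵀ Δ₊ P_L⁻¹ B_L, and in particular C₀ is negative semidefinite. -/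
open Matrix

/-- with the penalty `Σ₀ = −Z₊ Δ₊ P_L⁻¹`, the discrete boundary matrix
`C₀ = A + Σ₀ B_L + B_Lᵀ Σ₀ᵀ` equals `Z₋ C_L Z₋ᵀ − B_Lᵀ P_L⁻ᵀ Δ₊ P_L⁻¹ B_L`, and is
negative semidefinite whenever `C_L = Δ₋ + R_Lᵀ Δ₊ R_L` is. -/
theorem stmt_3 {n np nm : ℕ}
    (Zp : Matrix (Fin n) (Fin np) ℝ) (Zm : Matrix (Fin n) (Fin nm) ℝ)
    (Δp : Matrix (Fin np) (Fin np) ℝ) (Δm : Matrix (Fin nm) (Fin nm) ℝ)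
    (hΔp : Δp.PosDef) (hΔm : (-Δm).PosDef)
    (RL : Matrix (Fin np) (Fin nm) ℝ)
    (PL : Matrix (Fin np) (Fin np) ℝ) (hPL : IsUnit PL.det)
    (A : Matrix (Fin n) (Fin n) ℝ) (hA : A = Zp * Δp * Zpᵀ + Zm * Δm * Zmᵀ)
    (BL : Matrix (Fin np) (Fin n) ℝ) (hBL : BL = PL * (Zpᵀ + RL * Zmᵀ))
    (Sig0 : Matrix (Fin n) (Fin np) ℝ) (hSig0 : Sig0 = -(Zp * Δp * PL⁻¹))
    (hCL : (-(Δm + RLᵀ * Δp * RL)).PosSemidef) :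
    A + Sig0 * BL + BLᵀ * Sig0ᵀ
        = Zm * (Δm + RLᵀ * Δp * RL) * Zmᵀ - BLᵀ * (PL⁻¹)ᵀ * Δp * PL⁻¹ * BL
      ∧ (-(A + Sig0 * BL + BLᵀ * Sig0ᵀ)).PosSemidef := by
  have hsym : Δpᵀ = Δp := by
    have h := hΔp.1.eq
    simpa using h
  set Q : Matrix (Fin np) (Fin n) ℝ := Zpᵀ + RL * Zmᵀ with hQdef
  have hQ : PL⁻¹ * BL = Q := by
    rw [hBL, ← Matrix.mul_assoc, Matrix.nonsing_inv_mul _ hPL, Matrix.one_mul]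
  have hQT : Qᵀ = Zp + Zm * RLᵀ := by
    simp [hQdef, Matrix.transpose_add, Matrix.transpose_mul]
  have hBQ : BLᵀ * (PL⁻¹)ᵀ = Qᵀ := by
    rw [← Matrix.transpose_mul, hQ]
  have h3 : BLᵀ * (PL⁻¹)ᵀ * Δp * PL⁻¹ * BL = Qᵀ * Δp * Q := by
    rw [hBQ, Matrix.mul_assoc, Matrix.mul_assoc, hQ, ← Matrix.mul_assoc]
  have key : A + Sig0 * BL + BLᵀ * Sig0ᵀ
      = Zm * (Δm + RLᵀ * Δp * RL) * Zmᵀ - BLᵀ * (PL⁻¹)ᵀ * Δp * PL⁻¹ * BL := by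
    have h1 : Sig0 * BL = -(Zp * Δp * Q) := by
      rw [hSig0, Matrix.neg_mul, Matrix.mul_assoc, Matrix.mul_assoc, hQ,
        ← Matrix.mul_assoc]
    have h2 : BLᵀ * Sig0ᵀ = -(Qᵀ * Δp * Zpᵀ) := by
      have : BLᵀ * Sig0ᵀ = (Sig0 * BL)ᵀ := by rw [Matrix.transpose_mul]
      rw [this, h1, Matrix.transpose_neg, Matrix.transpose_mul, Matrix.transpose_mul,
        hsym, Matrix.mul_assoc]
    rw [hA, h1, h2, h3, hQT, hQdef]
    simp only [Matrix.mul_add, Matrix.add_mul, Matrix.mul_assoc, Matrix.neg_mul,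
      Matrix.mul_neg]
    abel
  refine ⟨key, ?_⟩
  rw [key]
  have hminus : -(Zm * (Δm + RLᵀ * Δp * RL) * Zmᵀ - BLᵀ * (PL⁻¹)ᵀ * Δp * PL⁻¹ * BL)
      = Zm * (-(Δm + RLᵀ * Δp * RL)) * Zmᵀ + Qᵀ * Δp * Q := by
    rw [h3]
    simp only [Matrix.mul_add, Matrix.add_mul, Matrix.mul_assoc, Matrix.neg_mul,
      Matrix.mul_neg, neg_sub, sub_eq_add_neg, neg_add]
    abel
  rw [hminus]
  have h1 : (Zm * (-(Δm + RLᵀ * Δp * RL)) * Zmᵀ).PosSemidef := by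
    have := hCL.mul_mul_conjTranspose_same Zm
    simpa using this
  have h2 : (Qᵀ * Δp * Q).PosSemidef := by
    have := hΔp.posSemidef.conjTranspose_mul_mul_same Q
    simpa using this
  exact h1.add h2
end

section
/- Let A = Z₊ Δ₊ Z₊ᵀ + Z₋ Δ₋ Z₋ᵀ with Z₊, Z₋, Δ₊, Δ₋ as above, R_R an n₋×n₊ matrix, P_R invertible, B_R = P_R(Z₋ᵀ + R_R Z₊ᵀ), and Σ_N = Z₋ Δ₋ P_R⁻¹. If C_R := −Δ₊ − R_Rᵀ Δ₋ R_R is negative semidefinite, then C_N := −A + Σ_N B_R + B_Rᵀ Σ_Nᵀ is negative semidefinite. -/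
/-!
Since `P_R⁻¹ P_R = 1`, the penalty term is `Σ_N B_R = Z₋ Δ₋ Wᵀ` with `W = Z₋ + Z₊ R_Rᵀ`, and
completing the square gives
`−C_N = Z₊ (−C_R) Z₊ᵀ + W (−Δ₋) Wᵀ`,
a sum of congruences of positive semidefinite matrices.
-/

open Matrix

namespace Matrix

variable {R ι κ μ : Type*} [Fintype κ] [Fintype μ]

lemma neg_neg_add_add_transpose_eq_of_transpose_eq [CommRing R]
    (Zp : Matrix ι κ R) (Zm : Matrix ι μ R) (Δp : Matrix κ κ R) (Δm : Matrix μ μ R)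
    (RR : Matrix μ κ R) (hΔm : Δmᵀ = Δm) :
    -(-(Zp * Δp * Zpᵀ + Zm * Δm * Zmᵀ) + Zm * Δm * (Zm + Zp * RRᵀ)ᵀ
        + (Zm * Δm * (Zm + Zp * RRᵀ)ᵀ)ᵀ)
      = Zp * (Δp + RRᵀ * Δm * RR) * Zpᵀ + (Zm + Zp * RRᵀ) * (-Δm) * (Zm + Zp * RRᵀ)ᵀ := by
  simp only [transpose_add, transpose_mul, transpose_transpose, hΔm, Matrix.mul_add,
    Matrix.add_mul, Matrix.mul_neg, Matrix.neg_mul, Matrix.mul_assoc]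
  abel

lemma PosSemidef.mul_mul_transpose_add [Fintype ι] {A : Matrix κ κ ℝ} {B : Matrix μ μ ℝ}
    (hA : A.PosSemidef) (hB : B.PosSemidef) (X : Matrix ι κ ℝ) (Y : Matrix ι μ ℝ) :
    (X * A * Xᵀ + Y * B * Yᵀ).PosSemidef := by
  simpa only [conjTranspose_eq_transpose_of_trivial] using
    (hA.mul_mul_conjTranspose_same X).add (hB.mul_mul_conjTranspose_same Y)

end Matrix

theorem stmt_4_general {n np nm : ℕ}
    (Zp : Matrix (Fin n) (Fin np) ℝ) (Zm : Matrix (Fin n) (Fin nm) ℝ)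
    (Δp : Matrix (Fin np) (Fin np) ℝ) (Δm : Matrix (Fin nm) (Fin nm) ℝ)
    (hΔm : (-Δm).PosDef)
    (RR : Matrix (Fin nm) (Fin np) ℝ)
    (PR : Matrix (Fin nm) (Fin nm) ℝ) (hPR : IsUnit PR.det)
    (A : Matrix (Fin n) (Fin n) ℝ) (hA : A = Zp * Δp * Zpᵀ + Zm * Δm * Zmᵀ)
    (BR : Matrix (Fin nm) (Fin n) ℝ) (hBR : BR = PR * (Zmᵀ + RR * Zpᵀ))
    (SigN : Matrix (Fin n) (Fin nm) ℝ) (hSigN : SigN = Zm * Δm * PR⁻¹)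
    (hCR : (-(-Δp - RRᵀ * Δm * RR)).PosSemidef) :
    (-(-A + SigN * BR + BRᵀ * SigNᵀ)).PosSemidef := by
  have hΔm_symm : Δmᵀ = Δm := neg_inj.mp hΔm.isHermitian.eq
  have hSigN_BR : SigN * BR = Zm * Δm * (Zm + Zp * RRᵀ)ᵀ := by
    rw [hSigN, hBR, Matrix.mul_assoc, nonsing_inv_mul_cancel_left _ _ hPR, transpose_add,
      transpose_mul, transpose_transpose]
  rw [← transpose_mul, hSigN_BR, hA,
    neg_neg_add_add_transpose_eq_of_transpose_eq _ _ _ _ _ hΔm_symm]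
  rw [neg_sub, sub_neg_eq_add, add_comm] at hCR
  exact hCR.mul_mul_transpose_add hΔm.posSemidef Zp _

/-- with the penalty `Σ_N = Z₋ Δ₋ P_R⁻¹`, the right-boundary matrix
`C_N = −A + Σ_N B_R + B_Rᵀ Σ_Nᵀ` is negative semidefinite whenever
`C_R = −Δ₊ − R_Rᵀ Δ₋ R_R` is. -/
theorem stmt_4 {n np nm : ℕ}
    (Zp : Matrix (Fin n) (Fin np) ℝ) (Zm : Matrix (Fin n) (Fin nm) ℝ)
    (Δp : Matrix (Fin np) (Fin np) ℝ) (Δm : Matrix (Fin nm) (Fin nm) ℝ)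
    (hΔp : Δp.PosDef) (hΔm : (-Δm).PosDef)
    (RR : Matrix (Fin nm) (Fin np) ℝ)
    (PR : Matrix (Fin nm) (Fin nm) ℝ) (hPR : IsUnit PR.det)
    (A : Matrix (Fin n) (Fin n) ℝ) (hA : A = Zp * Δp * Zpᵀ + Zm * Δm * Zmᵀ)
    (BR : Matrix (Fin nm) (Fin n) ℝ) (hBR : BR = PR * (Zmᵀ + RR * Zpᵀ))
    (SigN : Matrix (Fin n) (Fin nm) ℝ) (hSigN : SigN = Zm * Δm * PR⁻¹)
    (hCR : (-(-Δp - RRᵀ * Δm * RR)).PosSemidef) :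
    (-(-A + SigN * BR + BRᵀ * SigNᵀ)).PosSemidef :=
  stmt_4_general Zp Zm Δp Δm hΔm RR PR hPR A hA BR hBR SigN hSigN hCR
end

section
/- Let Δ₊, Δ₋ be invertible matrices (sizes n₊, n₋), R_L ∈ ℝ^{n₊×n₋}, and Γ₀ ∈ ℝ^{n₋×n₊}. Define Π₀ = −Δ₊ − Δ₊ R_L Δ₋⁻¹ Γ₀, R̃_L = −Δ₋⁻¹ R_Lᵀ Δ₊, Γ̃₀ = Γ₀ᵀ, Π̃₀ = Δ₋ − Δ₋ R̃_L Δ₊⁻¹ Γ̃₀. Then the 2×2 block matrix [[Δ₊ + Π₀ᵀ − Γ̃₀ R̃_L, Γ₀ᵀ − Γ̃₀], [R_Lᵀ Π₀ᵀ − Π̃₀ R̃_L, Δ₋ + R_Lᵀ Γ₀ᵀ − Π̃₀]] is the zero matrix. -/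
open Matrix

/-- the dual-consistency block matrix (equation (24) of the paper)
vanishes for the stated choices of `Π₀, R̃_L, Γ̃₀, Π̃₀`. -/
theorem stmt_5 {np nm : ℕ}
    (Δp : Matrix (Fin np) (Fin np) ℝ) (Δm : Matrix (Fin nm) (Fin nm) ℝ)
    (hΔp : IsUnit Δp.det) (hΔm : IsUnit Δm.det)
    (hΔps : Δpᵀ = Δp) (hΔms : Δmᵀ = Δm)
    (RL : Matrix (Fin np) (Fin nm) ℝ) (Γ0 : Matrix (Fin nm) (Fin np) ℝ)
    (Pi0 : Matrix (Fin np) (Fin np) ℝ) (hPi0 : Pi0 = -Δp - Δp * RL * Δm⁻¹ * Γ0)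
    (RLd : Matrix (Fin nm) (Fin np) ℝ) (hRLd : RLd = -(Δm⁻¹ * RLᵀ * Δp))
    (Γ0d : Matrix (Fin np) (Fin nm) ℝ) (hΓ0d : Γ0d = Γ0ᵀ)
    (Pi0d : Matrix (Fin nm) (Fin nm) ℝ) (hPi0d : Pi0d = Δm - Δm * RLd * Δp⁻¹ * Γ0d) :
    fromBlocks (Δp + Pi0ᵀ - Γ0d * RLd) (Γ0ᵀ - Γ0d)
               (RLᵀ * Pi0ᵀ - Pi0d * RLd) (Δm + RLᵀ * Γ0ᵀ - Pi0d) = 0 := by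
  have hmi : Δm⁻¹ᵀ = Δm⁻¹ := by rw [Matrix.transpose_nonsing_inv, hΔms]
  have hP : Pi0d = Δm + RLᵀ * Γ0ᵀ := by
    simp [hPi0d, hRLd, hΓ0d, Matrix.mul_assoc, Matrix.mul_nonsing_inv_cancel_left _ _ hΔm,
      Matrix.mul_nonsing_inv_cancel_left _ _ hΔp, sub_eq_add_neg]
  have hPT : Pi0ᵀ = -Δp - Γ0ᵀ * Δm⁻¹ * RLᵀ * Δp := by
    simp [hPi0, transpose_mul, hmi, hΔps, Matrix.mul_assoc, sub_eq_add_neg]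
  have hA : Δp + Pi0ᵀ - Γ0d * RLd = 0 := by
    rw [hPT, hΓ0d, hRLd]
    simp [Matrix.mul_assoc, sub_eq_add_neg]
  have hB : Γ0ᵀ - Γ0d = 0 := by rw [hΓ0d, sub_self]
  have hC : RLᵀ * Pi0ᵀ - Pi0d * RLd = 0 := by
    rw [hPT, hP, hRLd]
    simp [Matrix.mul_assoc, Matrix.mul_add, Matrix.add_mul, Matrix.mul_sub, Matrix.sub_mul,
      Matrix.mul_nonsing_inv_cancel_left _ _ hΔm, sub_eq_add_neg]
    abel
  have hD : Δm + RLᵀ * Γ0ᵀ - Pi0d = 0 := by rw [hP, sub_self]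
  rw [hA, hB, hC, hD, Matrix.fromBlocks_zero]
end

section
/- Let A_S be a real symmetric (N+1)×(N+1) matrix whose row sums are all zero (i.e. A_S·𝟏 = 0), and suppose the (N×N) lower-right principal submatrix Ā of A_S is invertible. Let J be the all-ones matrix, E₀ = e₀e₀ᵀ, and K₀ the matrix with zero first row and column and lower-right block Ā⁻¹. Then for every δ ≠ 0, (A_S + δE₀)(J/δ + K₀) = I; i.e. A_S + δE₀ is invertible with inverse J/δ + K₀. -/
/-!
Write `K₀` for `Ā⁻¹` bordered by a zero first row and column. Zero row sums give `A_S J = 0`, and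
`E₀ K₀ = 0` since the first row of `K₀` vanishes. By symmetry the columns of `A_S` also sum to
zero, so the first row of `A_S` is minus the sum of the others; as the rows after the first
multiply `K₀` to the rows of `[0 | Ā Ā⁻¹] = [0 | I]`, this gives `A_S K₀ = I - E₀ J`. Expanding,
`(A_S + δE₀)(J/δ + K₀) = E₀ J + (I - E₀ J) = I`.
-/

open Matrix

namespace Matrix

variable {R : Type*} [CommRing R] {N : ℕ}

def zeroBorder (B : Matrix (Fin N) (Fin N) R) : Matrix (Fin (N+1)) (Fin (N+1)) R :=
  of (Fin.cons (fun _ => 0) (fun i => Fin.cons 0 (fun j => B i j)))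

section zeroBorder

variable (B : Matrix (Fin N) (Fin N) R)

@[simp]
theorem zeroBorder_apply_zero_left (j : Fin (N+1)) : zeroBorder B 0 j = 0 := rfl

@[simp]
theorem zeroBorder_apply_zero_right (i : Fin (N+1)) : zeroBorder B i 0 = 0 := by
  cases i using Fin.cases <;> rfl

@[simp]
theorem zeroBorder_apply_succ_succ (i j : Fin N) : zeroBorder B i.succ j.succ = B i j := rfl

theorem single_zero_zero_mul_zeroBorder (c : R) : single 0 0 c * zeroBorder B = 0 := by
  ext i j
  by_cases hi : i = 0
  · subst hi; simp
  · simp [hi]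

theorem mul_zeroBorder_apply_zero {m : Type*} (M : Matrix m (Fin (N+1)) R) (i : m) :
    (M * zeroBorder B) i 0 = 0 := by
  simp [mul_apply]

theorem mul_zeroBorder_apply_succ {m : Type*} (M : Matrix m (Fin (N+1)) R) (i : m)
    (j : Fin N) : (M * zeroBorder B) i j.succ = (M.submatrix id Fin.succ * B) i j := by
  simp [mul_apply, Fin.sum_univ_succ]

end zeroBorder

theorem mul_const_one_eq_zero {m n : Type*} [Fintype n] {A : Matrix m n R}
    (h : A *ᵥ 1 = 0) : A * (of fun _ _ => 1 : Matrix n n R) = 0 := by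
  ext i j
  simpa [mul_apply, mulVec, dotProduct] using congrFun h i

theorem single_zero_zero_one_mul_const_one :
    single (0 : Fin (N+1)) 0 (1 : R) * (of fun _ _ => 1 : Matrix (Fin (N+1)) (Fin (N+1)) R) =
      of fun i _ => if i = 0 then 1 else 0 := by
  ext i j
  by_cases hi : i = 0
  · subst hi; simp
  · simp [hi]

theorem apply_zero_succ_eq_neg_vecMul_submatrix {A : Matrix (Fin (N+1)) (Fin (N+1)) R}
    (hcol : 1 ᵥ* A = 0) (k : Fin N) :
    A 0 k.succ = -(1 ᵥ* A.submatrix Fin.succ Fin.succ) k := by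
  have h := congrFun hcol k.succ
  simp only [vecMul, dotProduct, Pi.one_apply, one_mul, Fin.sum_univ_succ,
    Pi.zero_apply] at h
  simp only [vecMul, dotProduct, Pi.one_apply, one_mul, submatrix_apply]
  linear_combination h

theorem mul_zeroBorder_nonsing_inv_submatrix {A : Matrix (Fin (N+1)) (Fin (N+1)) R}
    (hcol : 1 ᵥ* A = 0) (hinv : IsUnit (A.submatrix Fin.succ Fin.succ).det) :
    A * zeroBorder (A.submatrix Fin.succ Fin.succ)⁻¹ =
      1 - of fun i _ => if i = 0 then 1 else 0 := by
  set Abar := A.submatrix Fin.succ Fin.succ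
  have hfirst : (fun k => A 0 k.succ) ᵥ* Abar⁻¹ = -1 := by
    have hrow0 : (fun k => A 0 k.succ) = -(1 ᵥ* Abar) :=
      funext (apply_zero_succ_eq_neg_vecMul_submatrix hcol)
    rw [hrow0, neg_vecMul, vecMul_vecMul,
      mul_nonsing_inv _ hinv, vecMul_one]
  ext i j
  cases j using Fin.cases with
  | zero => cases i using Fin.cases <;> simp [mul_zeroBorder_apply_zero]
  | succ j =>
    rw [mul_zeroBorder_apply_succ]
    cases i using Fin.cases with
    | zero =>
      simpa [mul_apply, vecMul, dotProduct, one_apply, (Fin.succ_ne_zero j).symm]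
        using congrFun hfirst j
    | succ i =>
      change (Abar * Abar⁻¹) i j = _
      simp [mul_nonsing_inv _ hinv, one_apply]

end Matrix

/-- Proposition 1, j = 0: if `A_S` is symmetric with zero row sums
and its lower-right principal submatrix `Ā` is invertible, then for `δ ≠ 0`,
`(A_S + δE₀)⁻¹ = J/δ + K₀`. -/
theorem stmt_10 {N : ℕ}
    (AS : Matrix (Fin (N+1)) (Fin (N+1)) ℝ) (hsym : AS.IsSymm)
    (hrow : AS *ᵥ (fun _ => (1:ℝ)) = 0)
    (Abar : Matrix (Fin N) (Fin N) ℝ)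
    (hAbar : Abar = AS.submatrix Fin.succ Fin.succ)
    (hinv : IsUnit Abar.det)
    (J : Matrix (Fin (N+1)) (Fin (N+1)) ℝ) (hJ : J = of fun _ _ => (1:ℝ))
    (E0 : Matrix (Fin (N+1)) (Fin (N+1)) ℝ) (hE0 : E0 = single 0 0 1)
    (K0 : Matrix (Fin (N+1)) (Fin (N+1)) ℝ)
    (hK0 : K0 = of (Fin.cons (fun _ => 0) (fun i => Fin.cons 0 (fun j => Abar⁻¹ i j))))
    (δ : ℝ) (hδ : δ ≠ 0) :
    (AS + δ • E0) * (δ⁻¹ • J + K0) = 1 ∧ (AS + δ • E0)⁻¹ = δ⁻¹ • J + K0 := by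
  subst hAbar hJ hE0
  have hcol : 1 ᵥ* AS = 0 := by rw [← hsym, vecMul_transpose]; exact hrow
  have hK0' : K0 = zeroBorder (AS.submatrix Fin.succ Fin.succ)⁻¹ := hK0
  have key : (AS + δ • single 0 0 1) * (δ⁻¹ • of (fun _ _ => 1) + K0) = 1 := by
    simp only [add_mul, mul_add, Matrix.mul_smul, Matrix.smul_mul, smul_smul, hK0',
      mul_const_one_eq_zero hrow, single_zero_zero_mul_zeroBorder,
      mul_zeroBorder_nonsing_inv_submatrix hcol hinv, single_zero_zero_one_mul_const_one,
      inv_mul_cancel₀ hδ]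
    simp
  exact ⟨key, inv_eq_right_inv key⟩
end

section
/- Under the hypotheses of the previous statement, if S is any matrix whose first and last rows annihilate the constant vector (i.e. e₀ᵀ S 𝟏 = 0 and e_Nᵀ S 𝟏 = 0), then the corner entries e₀ᵀ S(A_S+δE₀)⁻¹Sᵀ e₀, e_Nᵀ S(A_S+δE₀)⁻¹Sᵀ e_N, and e₀ᵀ S(A_S+δE₀)⁻¹Sᵀ e_N are independent of δ for δ ≠ 0. -/
/-!
Write `M δ = A_S + δ E₀` and `𝟏` for the constant vector. From `A_S 𝟏 = 0` we get `M δ 𝟏 = δ e₀`,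
so `(M δ)⁻¹ e₀ = δ⁻¹ 𝟏`, and symmetrically `e₀ᵀ (M δ)⁻¹ = δ⁻¹ 𝟏ᵀ`. The resolvent identity
`(M δ)⁻¹ - (M δ')⁻¹ = (M δ)⁻¹ (M δ' - M δ) (M δ')⁻¹` then gives
`(M δ)⁻¹ - (M δ')⁻¹ = (δ⁻¹ - δ'⁻¹) 𝟏𝟏ᵀ`, so `S (M δ)⁻¹ Sᵀ` changes with `δ` only by a multiple of
`(S𝟏)(S𝟏)ᵀ`, whose rows vanish where `S𝟏` does. Invertibility of `M δ` comes from expanding the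
determinant along row 0: `det (M δ) = det A_S + δ det Ā = δ det Ā`.
-/

open Matrix

namespace Matrix

theorem det_add_smul_single_zero_zero {R : Type*} [CommRing R] {m : ℕ}
    (A : Matrix (Fin (m + 1)) (Fin (m + 1)) R) (δ : R) :
    (A + δ • single 0 0 1).det = A.det + δ * (A.submatrix Fin.succ Fin.succ).det := by
  have hsub : ∀ f : Fin m → Fin (m + 1),
      (A + δ • single 0 0 1).submatrix Fin.succ f = A.submatrix Fin.succ f := fun f => by
    ext k l
    simp [(Fin.succ_ne_zero k).symm]
  rw [det_succ_row_zero, det_succ_row_zero A, Fin.sum_univ_succ, Fin.sum_univ_succ]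
  simp only [hsub]
  simp [(Fin.succ_ne_zero _).symm]
  ring

section

variable {K n : Type*} [Field K] [Fintype n] [DecidableEq n] {A : Matrix n n K} {δ : K}

theorem add_smul_single_mulVec_one (hA : A *ᵥ 1 = 0) (i : n) :
    (A + δ • single i i 1) *ᵥ 1 = δ • Pi.single i 1 := by
  ext j
  simp [add_mulVec, hA, single_mulVec, Pi.single_apply, Function.update_apply]

theorem inv_add_smul_single_mulVec (hA : A *ᵥ 1 = 0) (hδ : δ ≠ 0) (i : n)
    (hM : IsUnit (A + δ • single i i 1).det) :
    (A + δ • single i i 1)⁻¹ *ᵥ Pi.single i 1 = δ⁻¹ • 1 := by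
  have h := congrArg ((A + δ • single i i 1)⁻¹ *ᵥ ·) (add_smul_single_mulVec_one (δ := δ) hA i)
  simp only [mulVec_mulVec, nonsing_inv_mul _ hM, one_mulVec, mulVec_smul] at h
  exact (eq_inv_smul_iff₀ hδ).mpr h.symm

theorem single_vecMul_inv_add_smul_single (hA : 1 ᵥ* A = 0) (hδ : δ ≠ 0) (i : n)
    (hM : IsUnit (A + δ • single i i 1).det) :
    Pi.single i 1 ᵥ* (A + δ • single i i 1)⁻¹ = δ⁻¹ • 1 := by
  have hAt : Aᵀ *ᵥ 1 = 0 := by rw [mulVec_transpose, hA]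
  have hMt : (A + δ • single i i 1)ᵀ = Aᵀ + δ • single i i 1 := by
    rw [transpose_add, transpose_smul, transpose_single]
  rw [← mulVec_transpose, transpose_nonsing_inv, hMt]
  exact inv_add_smul_single_mulVec hAt hδ i (by rwa [← hMt, det_transpose])

theorem inv_add_smul_single_sub_inv (hA : A *ᵥ 1 = 0) (hA' : 1 ᵥ* A = 0) (i : n) {δ' : K}
    (hδ : δ ≠ 0) (hδ' : δ' ≠ 0) (hM : IsUnit (A + δ • single i i 1).det)
    (hM' : IsUnit (A + δ' • single i i 1).det) :
    (A + δ • single i i 1)⁻¹ - (A + δ' • single i i 1)⁻¹ = (δ⁻¹ - δ'⁻¹) • vecMulVec 1 1 := by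
  have hdiff : (A + δ' • single i i 1) - (A + δ • single i i 1)
      = (δ' - δ) • vecMulVec (Pi.single i 1) (Pi.single i 1) := by
    rw [add_sub_add_left_eq_sub, ← sub_smul, single_eq_single_vecMulVec_single]
  rw [inv_sub_inv (by simp only [isUnit_iff_isUnit_det, hM, hM']), hdiff, Matrix.mul_smul, Matrix.smul_mul,
    mul_vecMulVec, vecMulVec_mul, inv_add_smul_single_mulVec hA hδ i hM,
    single_vecMul_inv_add_smul_single hA' hδ' i hM', smul_vecMulVec, vecMulVec_smul, smul_smul,
    smul_smul]
  congr 1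
  field_simp

end

theorem mul_mul_transpose_apply_eq_of_sub_eq_smul {R m n : Type*} [CommRing R] [Fintype n]
    {X Y : Matrix n n R} {c : R} (hXY : X - Y = c • vecMulVec 1 1) (S : Matrix m n R) {i : m}
    (hi : (S *ᵥ 1) i = 0) (j : m) : (S * X * Sᵀ) i j = (S * Y * Sᵀ) i j := by
  have h : S * X * Sᵀ - S * Y * Sᵀ = c • vecMulVec (S *ᵥ 1) (S *ᵥ 1) := by
    rw [← Matrix.sub_mul, ← Matrix.mul_sub, hXY, Matrix.mul_smul, Matrix.smul_mul, mul_vecMulVec, vecMulVec_mul,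
      vecMul_transpose]
  rw [← sub_eq_zero, ← sub_apply, h, smul_apply, vecMulVec_apply, hi, zero_mul, smul_zero]

end Matrix

/-- Proposition 1, second part: if the first and last rows of `S`
annihilate constants, the corner entries of `S (A_S + δE₀)⁻¹ Sᵀ` are independent
of `δ ≠ 0`. -/
theorem stmt_11 {N : ℕ}
    (AS : Matrix (Fin (N+1)) (Fin (N+1)) ℝ) (hsym : AS.IsSymm)
    (hrow : AS *ᵥ (fun _ => (1:ℝ)) = 0)
    (Abar : Matrix (Fin N) (Fin N) ℝ)
    (hAbar : Abar = AS.submatrix Fin.succ Fin.succ)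
    (hinv : IsUnit Abar.det)
    (E0 : Matrix (Fin (N+1)) (Fin (N+1)) ℝ) (hE0 : E0 = single 0 0 1)
    (S : Matrix (Fin (N+1)) (Fin (N+1)) ℝ)
    (hS0 : (S *ᵥ fun _ => (1:ℝ)) 0 = 0)
    (hSN : (S *ᵥ fun _ => (1:ℝ)) (Fin.last N) = 0)
    (δ δ' : ℝ) (hδ : δ ≠ 0) (hδ' : δ' ≠ 0) :
    (S * (AS + δ • E0)⁻¹ * Sᵀ) 0 0 = (S * (AS + δ' • E0)⁻¹ * Sᵀ) 0 0
    ∧ (S * (AS + δ • E0)⁻¹ * Sᵀ) (Fin.last N) (Fin.last N)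
        = (S * (AS + δ' • E0)⁻¹ * Sᵀ) (Fin.last N) (Fin.last N)
    ∧ (S * (AS + δ • E0)⁻¹ * Sᵀ) 0 (Fin.last N)
        = (S * (AS + δ' • E0)⁻¹ * Sᵀ) 0 (Fin.last N) := by
  subst hE0 hAbar
  have hcol : 1 ᵥ* AS = 0 := by rw [← mulVec_transpose, hsym.eq]; exact hrow
  have hdet : AS.det = 0 := exists_mulVec_eq_zero_iff.mp ⟨1, one_ne_zero, hrow⟩
  have hunit {d : ℝ} (hd : d ≠ 0) : IsUnit (AS + d • single 0 0 1).det := by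
    rw [det_add_smul_single_zero_zero, hdet, zero_add]
    exact hd.isUnit.mul hinv
  have hdiff := inv_add_smul_single_sub_inv hrow hcol 0 hδ hδ' (hunit hδ) (hunit hδ')
  exact ⟨mul_mul_transpose_apply_eq_of_sub_eq_smul hdiff S hS0 0,
    mul_mul_transpose_apply_eq_of_sub_eq_smul hdiff S hSN _,
    mul_mul_transpose_apply_eq_of_sub_eq_smul hdiff S hS0 _⟩
end

section
/- Let A ∈ ℝ^{n×n} and E ∈ ℝ^{n×n} be symmetric. Then the 2n×2n block matrix Ā = [[A, −E], [−E, 0]] is symmetric, and if E is invertible then Ā is invertible with the number of positive eigenvalues of Ā equal to n and the number of negative eigenvalues equal to n. -/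
/-!
On the graph `{(u, B u)}` of `B = E⁻¹ (A / 2 + t)`, the quadratic form of `Ā` equals
`u·Au - 2 u·E B u = -2t |u|²`. Taking `t = ∓1/2` gives two `n`-dimensional subspaces on which it
is positive resp. negative definite. Such a subspace meets the span of the eigenvectors of the
opposite (or zero) sign trivially, so `Ā` has at least `n` positive and at least `n` negative
eigenvalues; having `2n` eigenvalues in total, it has exactly `n` of each. `Ā` is invertible with
inverse `[[0, -E⁻¹], [-E⁻¹, -E⁻¹AE⁻¹]]`.
-/

open Matrix

namespace Matrix

section Inertia

variable {ι : Type*} [Fintype ι] [DecidableEq ι] {M : Matrix ι ι ℝ}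

lemma IsHermitian.dotProduct_mulVec_eq_sum_eigenvalues (hM : M.IsHermitian) (x : ι → ℝ) :
    x ⬝ᵥ (M *ᵥ x) =
      ∑ i, hM.eigenvalues i * ((star (hM.eigenvectorUnitary : Matrix ι ι ℝ) *ᵥ x) i) ^ 2 := by
  set U := (hM.eigenvectorUnitary : Matrix ι ι ℝ)
  have hxU : x ᵥ* U = star U *ᵥ x := by
    rw [star_eq_conjTranspose, conjTranspose_eq_transpose_of_trivial, mulVec_transpose]
  conv_lhs => rw [hM.spectral_theorem, Unitary.conjStarAlgAut_apply]
  rw [← mulVec_mulVec, ← mulVec_mulVec, dotProduct_mulVec x U, hxU]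
  simp only [dotProduct, mulVec_diagonal, Function.comp_apply, RCLike.ofReal_real_eq_id, id]
  exact Finset.sum_congr rfl fun i _ => by ring

/-- Eigen-coordinates `i` with `σ λᵢ ≤ 0` contribute nonpositively to `σ q(f v)`, so the
coordinates with `0 < σ λᵢ` already determine `v`. -/
lemma IsHermitian.finrank_le_card_filter_eigenvalues (hM : M.IsHermitian)
    {V : Type*} [AddCommGroup V] [Module ℝ V] [FiniteDimensional ℝ V]
    (σ : ℝ) (f : V →ₗ[ℝ] (ι → ℝ)) (hf : ∀ v ≠ 0, 0 < σ * (f v ⬝ᵥ (M *ᵥ f v))) :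
    Module.finrank ℝ V ≤ (Finset.univ.filter fun i => 0 < σ * hM.eigenvalues i).card := by
  set S := {i : ι // 0 < σ * hM.eigenvalues i}
  let φ : V →ₗ[ℝ] (S → ℝ) := (LinearMap.funLeft ℝ ℝ (Subtype.val : S → ι)).comp
    ((mulVecLin (star (hM.eigenvectorUnitary : Matrix ι ι ℝ))).comp f)
  have hφ : Function.Injective φ := by
    rw [injective_iff_map_eq_zero]
    intro v hv
    by_contra hv0
    have hpos := hf v hv0
    rw [hM.dotProduct_mulVec_eq_sum_eigenvalues, Finset.mul_sum] at hpos
    refine hpos.not_ge (Finset.sum_nonpos fun i _ => ?_)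
    by_cases hi : 0 < σ * hM.eigenvalues i
    · have : (star (hM.eigenvectorUnitary : Matrix ι ι ℝ) *ᵥ f v) i = 0 := congrFun hv ⟨i, hi⟩
      simp [this]
    · rw [← mul_assoc]
      exact mul_nonpos_of_nonpos_of_nonneg (not_lt.1 hi) (sq_nonneg _)
  simpa [S, Fintype.card_subtype] using LinearMap.finrank_le_finrank_of_injective hφ

end Inertia

lemma isUnit_det_fromBlocks_zero₂₂ {R m : Type*} [CommRing R] [Fintype m] [DecidableEq m]
    (A : Matrix m m R) {B C : Matrix m m R} (hB : IsUnit B.det) (hC : IsUnit C.det) :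
    IsUnit (fromBlocks A B C 0).det := by
  apply isUnit_det_of_right_inverse (B := fromBlocks 0 C⁻¹ B⁻¹ (-(B⁻¹ * A * C⁻¹)))
  have hBA : B * (B⁻¹ * A * C⁻¹) = A * C⁻¹ := by
    rw [← Matrix.mul_assoc, ← Matrix.mul_assoc, mul_nonsing_inv B hB, Matrix.one_mul]
  rw [fromBlocks_multiply, ← fromBlocks_one]
  simp [mul_nonsing_inv B hB, mul_nonsing_inv C hC, hBA]

section GraphOfBlockMatrix

variable {ι : Type*} [Fintype ι]

lemma sumElim_dotProduct_fromBlocks_mulVec_sumElim (A E : Matrix ι ι ℝ) (hE : E.IsSymm)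
    (t : ℝ) (u v : ι → ℝ) (hv : E *ᵥ v = (2 : ℝ)⁻¹ • (A *ᵥ u) + t • u) :
    Sum.elim u v ⬝ᵥ (fromBlocks A (-E) (-E) 0 *ᵥ Sum.elim u v) = -(2 * t) * (u ⬝ᵥ u) := by
  have hEsymm : v ⬝ᵥ (E *ᵥ u) = u ⬝ᵥ (E *ᵥ v) := by
    rw [dotProduct_mulVec, ← mulVec_transpose, hE.eq, dotProduct_comm]
  simp only [fromBlocks_mulVec, Sum.elim_comp_inl, Sum.elim_comp_inr, zero_mulVec, add_zero,
    sumElim_dotProduct_sumElim, neg_mulVec, dotProduct_add, dotProduct_neg, hEsymm, hv,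
    dotProduct_smul, smul_eq_mul]
  ring

variable [DecidableEq ι]

lemma IsHermitian.card_le_card_filter_eigenvalues_fromBlocks {A E : Matrix ι ι ℝ}
    (hE : E.IsSymm) (hEdet : IsUnit E.det) (h : (Matrix.fromBlocks A (-E) (-E) 0).IsHermitian)
    {σ : ℝ} (hσ : σ ≠ 0) :
    Fintype.card ι ≤ (Finset.univ.filter fun i => 0 < σ * h.eigenvalues i).card := by
  set B := E⁻¹ * ((2 : ℝ)⁻¹ • A + (-(σ / 2)) • 1)
  have hgraph : ∀ u, fromRows 1 B *ᵥ u = Sum.elim u (B *ᵥ u) := fun u => by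
    rw [fromRows_mulVec, one_mulVec]
  have hEB : ∀ u, E *ᵥ (B *ᵥ u) = (2 : ℝ)⁻¹ • (A *ᵥ u) + (-(σ / 2)) • u := fun u => by
    rw [mulVec_mulVec, ← Matrix.mul_assoc, mul_nonsing_inv E hEdet, Matrix.one_mul,
      add_mulVec, smul_mulVec, smul_mulVec, one_mulVec]
  simpa using h.finrank_le_card_filter_eigenvalues σ (mulVecLin (fromRows 1 B)) fun u hu => by
    rw [mulVecLin_apply, hgraph, sumElim_dotProduct_fromBlocks_mulVec_sumElim A E hE _ u _ (hEB u)]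
    have : 0 < u ⬝ᵥ u := by simpa using dotProduct_self_star_pos_iff.2 hu
    have : 0 < σ * σ := mul_self_pos.2 hσ
    nlinarith

end GraphOfBlockMatrix

end Matrix

lemma Finset.card_filter_lt_add_card_filter_gt_le {ι α : Type*} [Fintype ι] [LinearOrder α]
    (a : α) (f : ι → α) :
    (Finset.univ.filter fun i => a < f i).card + (Finset.univ.filter fun i => f i < a).card ≤
      Fintype.card ι := by
  classical
  rw [← Finset.card_union_of_disjoint (Finset.disjoint_filter.2 fun _ _ hpos hneg =>
    hneg.not_gt hpos)]
  exact Finset.card_le_univ _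

/-- `Ā = [[A, −E], [−E, 0]]` is symmetric, and if `E` is invertible
then `Ā` is invertible with exactly `n` positive and `n` negative eigenvalues. -/
theorem stmt_17 {n : ℕ}
    (A E : Matrix (Fin n) (Fin n) ℝ) (hA : A.IsSymm) (hE : E.IsSymm)
    (Abar : Matrix (Fin n ⊕ Fin n) (Fin n ⊕ Fin n) ℝ)
    (hAbar : Abar = fromBlocks A (-E) (-E) 0) :
    Abar.IsSymm ∧
    (IsUnit E.det →
      IsUnit Abar.det ∧
      ∀ (hherm : Abar.IsHermitian),
        (Finset.univ.filter fun i => 0 < hherm.eigenvalues i).card = n ∧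
        (Finset.univ.filter fun i => hherm.eigenvalues i < 0).card = n) := by
  subst hAbar
  refine ⟨hA.fromBlocks (by rw [transpose_neg, hE.eq]) isSymm_zero, fun hEdet => ?_⟩
  have hnegEdet : IsUnit (-E).det := by
    rw [det_neg]
    exact (isUnit_one.neg.pow _).mul hEdet
  refine ⟨isUnit_det_fromBlocks_zero₂₂ A hnegEdet hnegEdet, fun hherm => ?_⟩
  have hpos := hherm.card_le_card_filter_eigenvalues_fromBlocks hE hEdet one_ne_zero
  have hneg :=
    hherm.card_le_card_filter_eigenvalues_fromBlocks hE hEdet (neg_ne_zero.2 one_ne_zero)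
  have htotal := Finset.card_filter_lt_add_card_filter_gt_le 0 hherm.eigenvalues
  simp only [one_mul, neg_one_mul, neg_pos, Fintype.card_fin, Fintype.card_sum]
    at hpos hneg htotal
  omega
end
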